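/- The 12-vertex graphs Q_1 and Q_1' are not isomorphic as simple graphs, but their 4-coloring complexes B(Q_1) and B(Q_1') are isomorphic as simple graphs. -/
import Mathlib


/-- A proper 4-coloring of a simple graph `G`. -/
def IsProperColoring {V : Type*} (G : SimpleGraph V) (f : V → Fin 4) : Prop :=
  ∀ ⦃u v : V⦄, G.Adj u v → f u ≠ f v

/-- `kempeCount G f a b` is the number of `ab`-Kempe chains of `f`, i.e. the number of
connected components of the subgraph of `G` induced on `f⁻¹({a, b})`. -/
noncomputable def kempeCount {V : Type*} (G : SimpleGraph V) (f : V → Fin 4)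
    (a b : Fin 4) : ℕ :=
  Nat.card ((G.induce {v | f v = a ∨ f v = b}).ConnectedComponent)

/-- Tutte's quantity `J_a(f) = p(a,b) + p(a,c) + p(a,d) - p(b,c) - p(b,d) - p(c,d)`,
where `{b, c, d} = Fin 4 \ {a}`. -/
noncomputable def Jcol {V : Type*} (G : SimpleGraph V) (f : V → Fin 4) (a : Fin 4) : ℤ :=
  (∑ x ∈ Finset.univ.erase a, (kempeCount G f a x : ℤ)) -
    ∑ x ∈ Finset.univ.erase a,
      ∑ y ∈ (Finset.univ.erase a).filter (fun y => x < y), (kempeCount G f x y : ℤ)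

/-- The coloring-partition of `f`: the set of its nonempty color classes. -/
def colPart {V : Type*} (f : V → Fin 4) : Set (Set V) :=
  {A | A.Nonempty ∧ ∃ c, A = f ⁻¹' {c}}

/-- `P` is a coloring-partition of `G` if it is the coloring-partition of some proper
4-coloring of `G`. -/
def IsColoringPartition {V : Type*} (G : SimpleGraph V) (P : Set (Set V)) : Prop :=
  ∃ f, IsProperColoring G f ∧ P = colPart f

/-- The set of all color classes of proper 4-colorings of `G`. -/
def colorClasses {V : Type*} (G : SimpleGraph V) : Set (Set V) :=
  {A | A.Nonempty ∧ ∃ f c, IsProperColoring G f ∧ A = f ⁻¹' {c}}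

/-- The 4-coloring complex `B(G)`: vertices are color classes of proper 4-colorings of `G`,
two distinct classes being adjacent iff they are color classes of a common proper
4-coloring. -/
def colorComplex {V : Type*} (G : SimpleGraph V) : SimpleGraph (colorClasses G) :=
  SimpleGraph.fromRel (fun A B => ∃ f, IsProperColoring G f ∧
    (∃ c, (A : Set V) = f ⁻¹' {c}) ∧ (∃ c, (B : Set V) = f ⁻¹' {c}))

/-- Two proper 4-colorings are adjacent if they have a common (nonempty) color class. -/
def ColAdj {V : Type*} (G : SimpleGraph V) (f g : V → Fin 4) : Prop :=
  IsProperColoring G f ∧ IsProperColoring G g ∧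
    ∃ c c', (f ⁻¹' {c}).Nonempty ∧ f ⁻¹' {c} = g ⁻¹' {c'}

/-- Generating relation for the triangulation `Q_k`.  The vertex `(i, 0)` is `a_i`,
`(i, 1)` is `b_i`, `(i, 2)` is `c_i` and `(i, 3)` is `d_i`.  Edges: the 4-cycles
`a_i b_i c_i d_i`, connecting edges between consecutive cycles, and the chords
`a_0 c_0` and `a_{k+1} c_{k+1}`. -/
def qkRel (k : ℕ) (u v : Fin (k + 2) × Fin 4) : Prop :=
  (u.1 = v.1 ∧ v.2 = u.2 + 1) ∨
  ((v.1 : ℕ) = (u.1 : ℕ) + 1 ∧ (v.2 = u.2 ∨ v.2 = u.2 + 1)) ∨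
  ((u.1 : ℕ) = 0 ∧ (v.1 : ℕ) = 0 ∧ u.2 = 0 ∧ v.2 = 2) ∨
  ((u.1 : ℕ) = k + 1 ∧ (v.1 : ℕ) = k + 1 ∧ u.2 = 0 ∧ v.2 = 2)

/-- The triangulation `Q_k`. -/
def Qk (k : ℕ) : SimpleGraph (Fin (k + 2) × Fin 4) := SimpleGraph.fromRel (qkRel k)

/-- Generating relation for `Q_k'`: like `Q_k`, but the outer chord is
`b_{k+1} d_{k+1}` instead of `a_{k+1} c_{k+1}`. -/
def qkRel' (k : ℕ) (u v : Fin (k + 2) × Fin 4) : Prop :=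
  (u.1 = v.1 ∧ v.2 = u.2 + 1) ∨
  ((v.1 : ℕ) = (u.1 : ℕ) + 1 ∧ (v.2 = u.2 ∨ v.2 = u.2 + 1)) ∨
  ((u.1 : ℕ) = 0 ∧ (v.1 : ℕ) = 0 ∧ u.2 = 0 ∧ v.2 = 2) ∨
  ((u.1 : ℕ) = k + 1 ∧ (v.1 : ℕ) = k + 1 ∧ u.2 = 1 ∧ v.2 = 3)

/-- The triangulation `Q_k'`. -/
def Qk' (k : ℕ) : SimpleGraph (Fin (k + 2) × Fin 4) := SimpleGraph.fromRel (qkRel' k)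

instance (k : ℕ) (u v : Fin (k+2) × Fin 4) : Decidable (qkRel k u v) := by
  unfold qkRel; infer_instance
instance (k : ℕ) (u v : Fin (k+2) × Fin 4) : Decidable (qkRel' k u v) := by
  unfold qkRel'; infer_instance
instance (k : ℕ) : DecidableRel (Qk k).Adj := fun u v =>
  decidable_of_iff' _ (SimpleGraph.fromRel_adj (qkRel k) u v)
instance (k : ℕ) : DecidableRel (Qk' k).Adj := fun u v =>
  decidable_of_iff' _ (SimpleGraph.fromRel_adj (qkRel' k) u v)
instance {V : Type*} [Fintype V] (G : SimpleGraph V) [DecidableRel G.Adj] (f : V → Fin 4) :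
    Decidable (IsProperColoring G f) :=
  inferInstanceAs (Decidable (∀ u v, G.Adj u v → f u ≠ f v))

/-- The 6 normalized proper colorings of `Qk 1`. -/
def M1 : Fin 6 → Fin 3 → Fin 4 → Fin 4 :=
  ![![![0,1,2,1],![2,3,0,3],![0,1,2,1]],
    ![![0,1,2,1],![3,2,3,0],![2,1,0,1]],
    ![![0,1,2,3],![1,2,3,0],![2,3,0,1]],
    ![![0,1,2,3],![1,2,3,0],![3,0,1,2]],
    ![![0,1,2,3],![2,3,0,1],![0,1,2,3]],
    ![![0,1,2,3],![2,3,0,1],![3,0,1,2]]]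
/-- The 6 normalized proper colorings of `Qk' 1`. -/
def M2 : Fin 6 → Fin 3 → Fin 4 → Fin 4 :=
  ![![![0,1,2,1],![2,3,0,3],![1,0,1,2]],
    ![![0,1,2,1],![3,2,3,0],![1,0,1,2]],
    ![![0,1,2,3],![1,2,3,0],![2,3,0,1]],
    ![![0,1,2,3],![1,2,3,0],![3,0,1,2]],
    ![![0,1,2,3],![2,3,0,1],![0,1,2,3]],
    ![![0,1,2,3],![2,3,0,1],![3,0,1,2]]]
def g1 (i : Fin 6) (v : Fin 3 × Fin 4) : Fin 4 := M1 i v.1 v.2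
def g2 (i : Fin 6) (v : Fin 3 × Fin 4) : Fin 4 := M2 i v.1 v.2
def tIdx : Fin 6 → Fin 6 := ![0,1,3,2,5,4]

lemma prop1 : ∀ i, IsProperColoring (Qk 1) (g1 i) := by decide
lemma prop2 : ∀ i, IsProperColoring (Qk' 1) (g2 i) := by decide
lemma surj1 : ∀ (i : Fin 6) (c : Fin 4), ∃ v, g1 i v = c := by decide
lemma surj2 : ∀ (i : Fin 6) (c : Fin 4), ∃ v, g2 i v = c := by decide
lemma tt : ∀ i, tIdx (tIdx i) = i := by decide

/-- The map on color classes. -/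
def F (A : Set (Fin 3 × Fin 4)) : Set (Fin 3 × Fin 4) :=
  {v | (v.1 ≠ 2 ∧ v ∈ A) ∨
       (v.1 = 2 ∧ ((∃ k, ((1:Fin 3), k) ∈ A ∧ ((2:Fin 3), 2*k+1-v.2) ∈ A) ∨
        ((∀ k, ((1:Fin 3), k) ∉ A) ∧ ((2:Fin 3), v.2 - 1) ∈ A)))}

lemma tbl1' : ∀ (i : Fin 6) (c : Fin 4) (v : Fin 3 × Fin 4),
    ((v.1 ≠ 2 ∧ g1 i v = c) ∨
     (v.1 = 2 ∧ ((∃ k, g1 i (1, k) = c ∧ g1 i (2, 2*k+1-v.2) = c) ∨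
      ((∀ k, ¬ g1 i (1, k) = c) ∧ g1 i (2, v.2 - 1) = c)))) ↔ g2 (tIdx i) v = c := by
  decide

lemma tbl2' : ∀ (i : Fin 6) (c : Fin 4) (v : Fin 3 × Fin 4),
    ((v.1 ≠ 2 ∧ g2 i v = c) ∨
     (v.1 = 2 ∧ ((∃ k, g2 i (1, k) = c ∧ g2 i (2, 2*k+1-v.2) = c) ∨
      ((∀ k, ¬ g2 i (1, k) = c) ∧ g2 i (2, v.2 - 1) = c)))) ↔ g1 (tIdx i) v = c := by
  decide

lemma Fg1 (i : Fin 6) (c : Fin 4) : F ((g1 i) ⁻¹' {c}) = (g2 (tIdx i)) ⁻¹' {c} := by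
  ext v
  simp only [F, Set.mem_setOf_eq, Set.mem_preimage, Set.mem_singleton_iff]
  exact tbl1' i c v

lemma Fg2 (i : Fin 6) (c : Fin 4) : F ((g2 i) ⁻¹' {c}) = (g1 (tIdx i)) ⁻¹' {c} := by
  ext v
  simp only [F, Set.mem_setOf_eq, Set.mem_preimage, Set.mem_singleton_iff]
  exact tbl2' i c v
-- (assume t5 contents; test pf/qf separately)
def pf (a b c x : Fin 4) : Fin 4 := if x = a then 0 else if x = b then 1 else if x = c then 2 else 3
def qf (a b c y : Fin 4) : Fin 4 := if y = 0 then a else if y = 1 then b else if y = 2 then c else 2 - a - b - c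

lemma qpf : ∀ a b c : Fin 4, a ≠ b → a ≠ c → b ≠ c → ∀ x, qf a b c (pf a b c x) = x := by decide
lemma pqf : ∀ a b c : Fin 4, a ≠ b → a ≠ c → b ≠ c → ∀ y, pf a b c (qf a b c y) = y := by decide
lemma pfa : ∀ a b c : Fin 4, pf a b c a = 0 := by decide
lemma pfb : ∀ a b c : Fin 4, a ≠ b → pf a b c b = 1 := by decide
lemma pfc : ∀ a b c : Fin 4, a ≠ c → b ≠ c → pf a b c c = 2 := by decide

set_option synthInstance.maxSize 5000 in
set_option synthInstance.maxHeartbeats 2000000 in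
lemma key1tuple : ∀ x0 : Fin 4, x0 = 0 → ∀ x1 : Fin 4, x1 = 1 → ∀ x2 : Fin 4, x2 = 2 →
    ∀ x3 : Fin 4, x3 ≠ x2 → x3 ≠ x0 →
    ∀ x4 : Fin 4, x4 ≠ x0 → x4 ≠ x3 →
    ∀ x5 : Fin 4, x5 ≠ x1 → x5 ≠ x0 → x5 ≠ x4 →
    ∀ x6 : Fin 4, x6 ≠ x2 → x6 ≠ x1 → x6 ≠ x5 →
    ∀ x7 : Fin 4, x7 ≠ x3 → x7 ≠ x2 → x7 ≠ x6 → x7 ≠ x4 →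
    ∀ x8 : Fin 4, x8 ≠ x4 → x8 ≠ x7 →
    ∀ x9 : Fin 4, x9 ≠ x5 → x9 ≠ x4 → x9 ≠ x8 →
    ∀ x10 : Fin 4, x10 ≠ x6 → x10 ≠ x5 → x10 ≠ x9 → x10 ≠ x8 →
    ∀ x11 : Fin 4, x11 ≠ x7 → x11 ≠ x6 → x11 ≠ x10 → x11 ≠ x8 →
    (x3 = 1 ∧ x4 = 2 ∧ x5 = 3 ∧ x6 = 0 ∧ x7 = 3 ∧ x8 = 0 ∧ x9 = 1 ∧ x10 = 2 ∧ x11 = 1) ∨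
    (x3 = 1 ∧ x4 = 3 ∧ x5 = 2 ∧ x6 = 3 ∧ x7 = 0 ∧ x8 = 2 ∧ x9 = 1 ∧ x10 = 0 ∧ x11 = 1) ∨
    (x3 = 3 ∧ x4 = 1 ∧ x5 = 2 ∧ x6 = 3 ∧ x7 = 0 ∧ x8 = 2 ∧ x9 = 3 ∧ x10 = 0 ∧ x11 = 1) ∨
    (x3 = 3 ∧ x4 = 1 ∧ x5 = 2 ∧ x6 = 3 ∧ x7 = 0 ∧ x8 = 3 ∧ x9 = 0 ∧ x10 = 1 ∧ x11 = 2) ∨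
    (x3 = 3 ∧ x4 = 2 ∧ x5 = 3 ∧ x6 = 0 ∧ x7 = 1 ∧ x8 = 0 ∧ x9 = 1 ∧ x10 = 2 ∧ x11 = 3) ∨
    (x3 = 3 ∧ x4 = 2 ∧ x5 = 3 ∧ x6 = 0 ∧ x7 = 1 ∧ x8 = 3 ∧ x9 = 0 ∧ x10 = 1 ∧ x11 = 2) := by
  decide

set_option synthInstance.maxSize 5000 in
set_option synthInstance.maxHeartbeats 2000000 in
lemma key2tuple : ∀ x0 : Fin 4, x0 = 0 → ∀ x1 : Fin 4, x1 = 1 → ∀ x2 : Fin 4, x2 = 2 →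
    ∀ x3 : Fin 4, x3 ≠ x2 → x3 ≠ x0 →
    ∀ x4 : Fin 4, x4 ≠ x0 → x4 ≠ x3 →
    ∀ x5 : Fin 4, x5 ≠ x1 → x5 ≠ x0 → x5 ≠ x4 →
    ∀ x6 : Fin 4, x6 ≠ x2 → x6 ≠ x1 → x6 ≠ x5 →
    ∀ x7 : Fin 4, x7 ≠ x3 → x7 ≠ x2 → x7 ≠ x6 → x7 ≠ x4 →
    ∀ x8 : Fin 4, x8 ≠ x4 → x8 ≠ x7 →
    ∀ x9 : Fin 4, x9 ≠ x5 → x9 ≠ x4 → x9 ≠ x8 →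
    ∀ x10 : Fin 4, x10 ≠ x6 → x10 ≠ x5 → x10 ≠ x9 →
    ∀ x11 : Fin 4, x11 ≠ x7 → x11 ≠ x6 → x11 ≠ x10 → x11 ≠ x8 → x11 ≠ x9 →
    (x3 = 1 ∧ x4 = 2 ∧ x5 = 3 ∧ x6 = 0 ∧ x7 = 3 ∧ x8 = 1 ∧ x9 = 0 ∧ x10 = 1 ∧ x11 = 2) ∨
    (x3 = 1 ∧ x4 = 3 ∧ x5 = 2 ∧ x6 = 3 ∧ x7 = 0 ∧ x8 = 1 ∧ x9 = 0 ∧ x10 = 1 ∧ x11 = 2) ∨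
    (x3 = 3 ∧ x4 = 1 ∧ x5 = 2 ∧ x6 = 3 ∧ x7 = 0 ∧ x8 = 2 ∧ x9 = 3 ∧ x10 = 0 ∧ x11 = 1) ∨
    (x3 = 3 ∧ x4 = 1 ∧ x5 = 2 ∧ x6 = 3 ∧ x7 = 0 ∧ x8 = 3 ∧ x9 = 0 ∧ x10 = 1 ∧ x11 = 2) ∨
    (x3 = 3 ∧ x4 = 2 ∧ x5 = 3 ∧ x6 = 0 ∧ x7 = 1 ∧ x8 = 0 ∧ x9 = 1 ∧ x10 = 2 ∧ x11 = 3) ∨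
    (x3 = 3 ∧ x4 = 2 ∧ x5 = 3 ∧ x6 = 0 ∧ x7 = 1 ∧ x8 = 3 ∧ x9 = 0 ∧ x10 = 1 ∧ x11 = 2) := by
  decide

lemma master1 (f : Fin 3 × Fin 4 → Fin 4) (hf : IsProperColoring (Qk 1) f) :
    ∃ (i : Fin 6) (p q : Fin 4 → Fin 4), (∀ x, q (p x) = x) ∧ (∀ y, p (q y) = y) ∧
      ∀ v, p (f v) = g1 i v := by
  set a := f (0,0) with ha
  set b := f (0,1) with hb
  set c := f (0,2) with hc
  have hab : a ≠ b := hf (by decide)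
  have hac : a ≠ c := hf (by decide)
  have hbc : b ≠ c := hf (by decide)
  set p := pf a b c with hp
  set q := qf a b c with hq
  have hqp : ∀ x, q (p x) = x := qpf a b c hab hac hbc
  have hpq : ∀ y, p (q y) = y := pqf a b c hab hac hbc
  set g : Fin 3 × Fin 4 → Fin 4 := fun v => p (f v) with hgdef
  have hg : ∀ u v : Fin 3 × Fin 4, (Qk 1).Adj u v → g u ≠ g v := by
    intro u v huv h
    exact hf huv (by have := congrArg q h; rwa [hqp, hqp] at this)
  have h00 : g (0,0) = 0 := pfa a b c
  have h01 : g (0,1) = 1 := pfb a b c hab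
  have h02 : g (0,2) = 2 := pfc a b c hac hbc
  have key := key1tuple (g (0,0)) h00 (g (0,1)) h01 (g (0,2)) h02
    (g (0,3)) (hg _ _ (by decide)) (hg _ _ (by decide))
    (g (1,0)) (hg _ _ (by decide)) (hg _ _ (by decide))
    (g (1,1)) (hg _ _ (by decide)) (hg _ _ (by decide)) (hg _ _ (by decide))
    (g (1,2)) (hg _ _ (by decide)) (hg _ _ (by decide)) (hg _ _ (by decide))
    (g (1,3)) (hg _ _ (by decide)) (hg _ _ (by decide)) (hg _ _ (by decide)) (hg _ _ (by decide))
    (g (2,0)) (hg _ _ (by decide)) (hg _ _ (by decide))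
    (g (2,1)) (hg _ _ (by decide)) (hg _ _ (by decide)) (hg _ _ (by decide))
    (g (2,2)) (hg _ _ (by decide)) (hg _ _ (by decide)) (hg _ _ (by decide)) (hg _ _ (by decide))
    (g (2,3)) (hg _ _ (by decide)) (hg _ _ (by decide)) (hg _ _ (by decide)) (hg _ _ (by decide))
  rcases key with ⟨e3,e4,e5,e6,e7,e8,e9,e10,e11⟩|⟨e3,e4,e5,e6,e7,e8,e9,e10,e11⟩|
    ⟨e3,e4,e5,e6,e7,e8,e9,e10,e11⟩|⟨e3,e4,e5,e6,e7,e8,e9,e10,e11⟩|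
    ⟨e3,e4,e5,e6,e7,e8,e9,e10,e11⟩|⟨e3,e4,e5,e6,e7,e8,e9,e10,e11⟩
  · refine ⟨0, p, q, hqp, hpq, fun v => ?_⟩
    fin_cases v <;> assumption
  · refine ⟨1, p, q, hqp, hpq, fun v => ?_⟩
    fin_cases v <;> assumption
  · refine ⟨2, p, q, hqp, hpq, fun v => ?_⟩
    fin_cases v <;> assumption
  · refine ⟨3, p, q, hqp, hpq, fun v => ?_⟩
    fin_cases v <;> assumption
  · refine ⟨4, p, q, hqp, hpq, fun v => ?_⟩
    fin_cases v <;> assumption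
  · refine ⟨5, p, q, hqp, hpq, fun v => ?_⟩
    fin_cases v <;> assumption

lemma master2 (f : Fin 3 × Fin 4 → Fin 4) (hf : IsProperColoring (Qk' 1) f) :
    ∃ (i : Fin 6) (p q : Fin 4 → Fin 4), (∀ x, q (p x) = x) ∧ (∀ y, p (q y) = y) ∧
      ∀ v, p (f v) = g2 i v := by
  set a := f (0,0) with ha
  set b := f (0,1) with hb
  set c := f (0,2) with hc
  have hab : a ≠ b := hf (by decide)
  have hac : a ≠ c := hf (by decide)
  have hbc : b ≠ c := hf (by decide)
  set p := pf a b c with hp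
  set q := qf a b c with hq
  have hqp : ∀ x, q (p x) = x := qpf a b c hab hac hbc
  have hpq : ∀ y, p (q y) = y := pqf a b c hab hac hbc
  set g : Fin 3 × Fin 4 → Fin 4 := fun v => p (f v) with hgdef
  have hg : ∀ u v : Fin 3 × Fin 4, (Qk' 1).Adj u v → g u ≠ g v := by
    intro u v huv h
    exact hf huv (by have := congrArg q h; rwa [hqp, hqp] at this)
  have h00 : g (0,0) = 0 := pfa a b c
  have h01 : g (0,1) = 1 := pfb a b c hab
  have h02 : g (0,2) = 2 := pfc a b c hac hbc
  have key := key2tuple (g (0,0)) h00 (g (0,1)) h01 (g (0,2)) h02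
    (g (0,3)) (hg _ _ (by decide)) (hg _ _ (by decide))
    (g (1,0)) (hg _ _ (by decide)) (hg _ _ (by decide))
    (g (1,1)) (hg _ _ (by decide)) (hg _ _ (by decide)) (hg _ _ (by decide))
    (g (1,2)) (hg _ _ (by decide)) (hg _ _ (by decide)) (hg _ _ (by decide))
    (g (1,3)) (hg _ _ (by decide)) (hg _ _ (by decide)) (hg _ _ (by decide)) (hg _ _ (by decide))
    (g (2,0)) (hg _ _ (by decide)) (hg _ _ (by decide))
    (g (2,1)) (hg _ _ (by decide)) (hg _ _ (by decide)) (hg _ _ (by decide))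
    (g (2,2)) (hg _ _ (by decide)) (hg _ _ (by decide)) (hg _ _ (by decide))
    (g (2,3)) (hg _ _ (by decide)) (hg _ _ (by decide)) (hg _ _ (by decide)) (hg _ _ (by decide))
      (hg _ _ (by decide))
  rcases key with ⟨e3,e4,e5,e6,e7,e8,e9,e10,e11⟩|⟨e3,e4,e5,e6,e7,e8,e9,e10,e11⟩|
    ⟨e3,e4,e5,e6,e7,e8,e9,e10,e11⟩|⟨e3,e4,e5,e6,e7,e8,e9,e10,e11⟩|
    ⟨e3,e4,e5,e6,e7,e8,e9,e10,e11⟩|⟨e3,e4,e5,e6,e7,e8,e9,e10,e11⟩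
  · refine ⟨0, p, q, hqp, hpq, fun v => ?_⟩
    fin_cases v <;> assumption
  · refine ⟨1, p, q, hqp, hpq, fun v => ?_⟩
    fin_cases v <;> assumption
  · refine ⟨2, p, q, hqp, hpq, fun v => ?_⟩
    fin_cases v <;> assumption
  · refine ⟨3, p, q, hqp, hpq, fun v => ?_⟩
    fin_cases v <;> assumption
  · refine ⟨4, p, q, hqp, hpq, fun v => ?_⟩
    fin_cases v <;> assumption
  · refine ⟨5, p, q, hqp, hpq, fun v => ?_⟩
    fin_cases v <;> assumption

lemma norm1 (f : Fin 3 × Fin 4 → Fin 4) (hf : IsProperColoring (Qk 1) f) :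
    ∃ i : Fin 6, ∀ c : Fin 4, ∃ c', f ⁻¹' {c} = (g1 i) ⁻¹' {c'} := by
  obtain ⟨i, p, q, hqp, hpq, hv⟩ := master1 f hf
  refine ⟨i, fun c => ⟨p c, ?_⟩⟩
  ext v
  simp only [Set.mem_preimage, Set.mem_singleton_iff]
  constructor
  · rintro rfl; exact (hv v).symm
  · intro h
    have h2 := congrArg q ((hv v).trans h)
    rwa [hqp, hqp] at h2

lemma norm2 (f : Fin 3 × Fin 4 → Fin 4) (hf : IsProperColoring (Qk' 1) f) :
    ∃ i : Fin 6, ∀ c : Fin 4, ∃ c', f ⁻¹' {c} = (g2 i) ⁻¹' {c'} := by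
  obtain ⟨i, p, q, hqp, hpq, hv⟩ := master2 f hf
  refine ⟨i, fun c => ⟨p c, ?_⟩⟩
  ext v
  simp only [Set.mem_preimage, Set.mem_singleton_iff]
  constructor
  · rintro rfl; exact (hv v).symm
  · intro h
    have h2 := congrArg q ((hv v).trans h)
    rwa [hqp, hqp] at h2

lemma mem1 (A : Set (Fin 3 × Fin 4)) :
    A ∈ colorClasses (Qk 1) ↔ ∃ i c, A = (g1 i) ⁻¹' {c} := by
  constructor
  · rintro ⟨hne, f, c, hf, rfl⟩
    obtain ⟨i, hi⟩ := norm1 f hf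
    obtain ⟨c', hc'⟩ := hi c
    exact ⟨i, c', hc'⟩
  · rintro ⟨i, c, rfl⟩
    obtain ⟨v, hv⟩ := surj1 i c
    exact ⟨⟨v, hv⟩, g1 i, c, prop1 i, rfl⟩

lemma mem2 (A : Set (Fin 3 × Fin 4)) :
    A ∈ colorClasses (Qk' 1) ↔ ∃ i c, A = (g2 i) ⁻¹' {c} := by
  constructor
  · rintro ⟨hne, f, c, hf, rfl⟩
    obtain ⟨i, hi⟩ := norm2 f hf
    obtain ⟨c', hc'⟩ := hi c
    exact ⟨i, c', hc'⟩
  · rintro ⟨i, c, rfl⟩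
    obtain ⟨v, hv⟩ := surj2 i c
    exact ⟨⟨v, hv⟩, g2 i, c, prop2 i, rfl⟩

lemma Fmem1 {A : Set (Fin 3 × Fin 4)} (hA : A ∈ colorClasses (Qk 1)) :
    F A ∈ colorClasses (Qk' 1) := by
  obtain ⟨i, c, rfl⟩ := (mem1 A).mp hA
  exact (mem2 _).mpr ⟨tIdx i, c, Fg1 i c⟩

lemma Fmem2 {A : Set (Fin 3 × Fin 4)} (hA : A ∈ colorClasses (Qk' 1)) :
    F A ∈ colorClasses (Qk 1) := by
  obtain ⟨i, c, rfl⟩ := (mem2 A).mp hA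
  exact (mem1 _).mpr ⟨tIdx i, c, Fg2 i c⟩

lemma FF1 {A : Set (Fin 3 × Fin 4)} (hA : A ∈ colorClasses (Qk 1)) : F (F A) = A := by
  obtain ⟨i, c, rfl⟩ := (mem1 A).mp hA
  rw [Fg1, Fg2, tt]

lemma FF2 {A : Set (Fin 3 × Fin 4)} (hA : A ∈ colorClasses (Qk' 1)) : F (F A) = A := by
  obtain ⟨i, c, rfl⟩ := (mem2 A).mp hA
  rw [Fg2, Fg1, tt]

lemma relF1 {A B : Set (Fin 3 × Fin 4)}
    (h : ∃ f, IsProperColoring (Qk 1) f ∧ (∃ c, A = f ⁻¹' {c}) ∧ (∃ c, B = f ⁻¹' {c})) :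
    ∃ f, IsProperColoring (Qk' 1) f ∧ (∃ c, F A = f ⁻¹' {c}) ∧ (∃ c, F B = f ⁻¹' {c}) := by
  obtain ⟨f, hf, ⟨c, rfl⟩, ⟨c', rfl⟩⟩ := h
  obtain ⟨i, hi⟩ := norm1 f hf
  obtain ⟨d, hd⟩ := hi c
  obtain ⟨d', hd'⟩ := hi c'
  exact ⟨g2 (tIdx i), prop2 _, ⟨d, by rw [hd, Fg1]⟩, ⟨d', by rw [hd', Fg1]⟩⟩

lemma relF2 {A B : Set (Fin 3 × Fin 4)}
    (h : ∃ f, IsProperColoring (Qk' 1) f ∧ (∃ c, A = f ⁻¹' {c}) ∧ (∃ c, B = f ⁻¹' {c})) :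
    ∃ f, IsProperColoring (Qk 1) f ∧ (∃ c, F A = f ⁻¹' {c}) ∧ (∃ c, F B = f ⁻¹' {c}) := by
  obtain ⟨f, hf, ⟨c, rfl⟩, ⟨c', rfl⟩⟩ := h
  obtain ⟨i, hi⟩ := norm2 f hf
  obtain ⟨d, hd⟩ := hi c
  obtain ⟨d', hd'⟩ := hi c'
  exact ⟨g1 (tIdx i), prop1 _, ⟨d, by rw [hd, Fg2]⟩, ⟨d', by rw [hd', Fg2]⟩⟩

noncomputable def complexEquiv : colorClasses (Qk 1) ≃ colorClasses (Qk' 1) where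
  toFun A := ⟨F A.1, Fmem1 A.2⟩
  invFun B := ⟨F B.1, Fmem2 B.2⟩
  left_inv A := Subtype.ext (FF1 A.2)
  right_inv B := Subtype.ext (FF2 B.2)

noncomputable def complexIso : colorComplex (Qk 1) ≃g colorComplex (Qk' 1) := by
  refine ⟨complexEquiv, ?_⟩
  rintro ⟨A, hA⟩ ⟨B, hB⟩
  show (colorComplex (Qk' 1)).Adj ⟨F A, _⟩ ⟨F B, _⟩ ↔ _
  rw [colorComplex, colorComplex, SimpleGraph.fromRel_adj, SimpleGraph.fromRel_adj]
  constructor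
  · rintro ⟨hne, h | h⟩
    · refine ⟨?_, Or.inl ?_⟩
      · intro hAB; exact hne (by rw [Subtype.mk.injEq] at hAB ⊢; rw [hAB])
      · have := relF2 (A := F A) (B := F B) h
        rwa [FF1 hA, FF1 hB] at this
    · refine ⟨?_, Or.inr ?_⟩
      · intro hAB; exact hne (by rw [Subtype.mk.injEq] at hAB ⊢; rw [hAB])
      · have := relF2 (A := F B) (B := F A) h
        rwa [FF1 hA, FF1 hB] at this
  · rintro ⟨hne, h | h⟩
    · refine ⟨?_, Or.inl (relF1 h)⟩
      intro hAB
      rw [Subtype.mk.injEq] at hAB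
      refine hne (Subtype.ext (show A = B from ?_))
      calc A = F (F A) := (FF1 hA).symm
        _ = F (F B) := by rw [hAB]
        _ = B := FF1 hB
    · refine ⟨?_, Or.inr (relF1 h)⟩
      intro hAB
      rw [Subtype.mk.injEq] at hAB
      refine hne (Subtype.ext (show A = B from ?_))
      calc A = F (F A) := (FF1 hA).symm
        _ = F (F B) := by rw [hAB]
        _ = B := FF1 hB

def pat (G : SimpleGraph (Fin 3 × Fin 4)) : Prop :=
  ∃ x5 x2, G.Adj x5 x2 ∧ ∃ x3, G.Adj x2 x3 ∧ ¬G.Adj x5 x3 ∧ x5 ≠ x3 ∧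
    ∃ x4, G.Adj x3 x4 ∧ G.Adj x5 x4 ∧ ¬G.Adj x2 x4 ∧ x2 ≠ x4 ∧
    ∃ x0, G.Adj x5 x0 ∧ ¬G.Adj x2 x0 ∧ ¬G.Adj x3 x0 ∧ ¬G.Adj x4 x0 ∧
      x2 ≠ x0 ∧ x3 ≠ x0 ∧ x4 ≠ x0 ∧
    ∃ x1, G.Adj x4 x1 ∧ ¬G.Adj x0 x1 ∧ ¬G.Adj x2 x1 ∧ ¬G.Adj x3 x1 ∧ ¬G.Adj x5 x1 ∧
      x0 ≠ x1 ∧ x2 ≠ x1 ∧ x3 ≠ x1 ∧ x5 ≠ x1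

set_option synthInstance.maxSize 2000 in
set_option synthInstance.maxHeartbeats 1000000 in
instance (G : SimpleGraph (Fin 3 × Fin 4)) [DecidableRel G.Adj] : Decidable (pat G) := by
  unfold pat; infer_instance

lemma patQ1 : pat (Qk 1) := by decide
lemma npatQ1' : ¬ pat (Qk' 1) := by decide

lemma notIso : IsEmpty (Qk 1 ≃g Qk' 1) := by
  constructor
  intro e
  apply npatQ1'
  obtain ⟨x5, x2, h1, x3, h2, h3, h4, x4, h5, h6, h7, h8,
    x0, h9, h10, h11, h12, h13, h14, h15,
    x1, h16, h17, h18, h19, h20, h21, h22, h23, h24⟩ := patQ1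
  exact ⟨e x5, e x2, e.map_adj_iff.mpr h1, e x3, e.map_adj_iff.mpr h2,
    fun h => h3 (e.map_adj_iff.mp h), fun h => h4 (e.toEquiv.injective h),
    e x4, e.map_adj_iff.mpr h5, e.map_adj_iff.mpr h6,
    fun h => h7 (e.map_adj_iff.mp h), fun h => h8 (e.toEquiv.injective h),
    e x0, e.map_adj_iff.mpr h9, fun h => h10 (e.map_adj_iff.mp h),
    fun h => h11 (e.map_adj_iff.mp h), fun h => h12 (e.map_adj_iff.mp h),
    fun h => h13 (e.toEquiv.injective h), fun h => h14 (e.toEquiv.injective h),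
    fun h => h15 (e.toEquiv.injective h),
    e x1, e.map_adj_iff.mpr h16, fun h => h17 (e.map_adj_iff.mp h),
    fun h => h18 (e.map_adj_iff.mp h), fun h => h19 (e.map_adj_iff.mp h),
    fun h => h20 (e.map_adj_iff.mp h), fun h => h21 (e.toEquiv.injective h),
    fun h => h22 (e.toEquiv.injective h), fun h => h23 (e.toEquiv.injective h),
    fun h => h24 (e.toEquiv.injective h)⟩


/-- The 12-vertex graphs `Q_1` and `Q_1'` are not isomorphic, but their 4-coloring
complexes `B(Q_1)` and `B(Q_1')` are isomorphic. -/
theorem Q1_Q1'_not_iso_but_complexes_iso :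
    IsEmpty (Qk 1 ≃g Qk' 1) ∧
    Nonempty (colorComplex (Qk 1) ≃g colorComplex (Qk' 1)) :=
  ⟨notIso, ⟨complexIso⟩⟩
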